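/- For every integer b ≥ 2, the number ∑_{n≥0} s₂(n)/b^n is irrational, where s₂(n) is the binary digit sum of n. -/

import Mathlib

def s2 (n : ℕ) : ℕ := (Nat.digits 2 n).sum

lemma s2_two_mul (n : ℕ) : s2 (2 * n) = s2 n := by
  rcases Nat.eq_zero_or_pos n with h | h
  · simp [h]
  · unfold s2
    rw [Nat.digits_def' (by norm_num) (by omega)]
    simp [Nat.mul_div_cancel_left _ (by norm_num : 0 < 2), Nat.mul_mod_right]

lemma s2_two_mul_add_one (n : ℕ) : s2 (2 * n + 1) = s2 n + 1 := by
  unfold s2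
  rw [Nat.digits_def' (by norm_num) (by omega)]
  have h1 : (2 * n + 1) % 2 = 1 := by omega
  have h2 : (2 * n + 1) / 2 = n := by omega
  rw [h1, h2]
  simp [Nat.add_comm]

lemma s2_le (n : ℕ) : s2 n ≤ n := by
  induction n using Nat.strong_induction_on with
  | _ n ih =>
    rcases Nat.eq_zero_or_pos n with h | h
    · simp [h, s2]
    · rcases Nat.even_or_odd n with ⟨m, hm⟩ | ⟨m, hm⟩
      · subst hm
        rw [← two_mul, s2_two_mul]
        have := ih m (by omega)
        omega
      · subst hm
        rw [s2_two_mul_add_one]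
        have := ih m (by omega)
        omega

lemma summable_s2 {x : ℝ} (h0 : 0 ≤ x) (h1 : x < 1) :
    Summable (fun n : ℕ => (s2 n : ℝ) * x ^ n) := by
  have hg : Summable (fun n : ℕ => (n : ℝ) * x ^ n) := by
    simpa using summable_pow_mul_geometric_of_norm_lt_one 1
      (by rwa [Real.norm_eq_abs, abs_of_nonneg h0])
  refine Summable.of_nonneg_of_le (fun n => by positivity) (fun n => ?_) hg
  exact mul_le_mul_of_nonneg_right (by exact_mod_cast s2_le n) (by positivity)

lemma S_le {x : ℝ} (h0 : 0 ≤ x) (h1 : x < 1) :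
    (∑' n : ℕ, (s2 n : ℝ) * x ^ n) ≤ x / (1 - x) ^ 2 := by
  have hg : Summable (fun n : ℕ => (n : ℝ) * x ^ n) := by
    simpa using summable_pow_mul_geometric_of_norm_lt_one 1
      (by rwa [Real.norm_eq_abs, abs_of_nonneg h0])
  have := tsum_coe_mul_geometric_of_norm_lt_one
    (by rwa [Real.norm_eq_abs, abs_of_nonneg h0] : ‖x‖ < 1)
  rw [← this]
  exact Summable.tsum_le_tsum (fun n => mul_le_mul_of_nonneg_right
    (by exact_mod_cast s2_le n) (by positivity)) (summable_s2 h0 h1) hg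

set_option maxHeartbeats 1000000 in
lemma funEq {x : ℝ} (h0 : 0 ≤ x) (h1 : x < 1) :
    (∑' n : ℕ, (s2 n : ℝ) * x ^ n)
      = (1 + x) * (∑' n : ℕ, (s2 n : ℝ) * (x ^ 2) ^ n) + x / (1 - x ^ 2) := by
  have hx2 : x ^ 2 < 1 := by nlinarith
  have hx20 : (0:ℝ) ≤ x ^ 2 := by positivity
  have hS2 := summable_s2 hx20 hx2
  have hgeo : Summable (fun n : ℕ => (x ^ 2) ^ n) :=
    summable_geometric_of_lt_one hx20 hx2
  have he : Summable (fun k : ℕ => (s2 (2 * k) : ℝ) * x ^ (2 * k)) := by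
    simp_rw [s2_two_mul, pow_mul]
    exact hS2
  have ho : Summable (fun k : ℕ => (s2 (2 * k + 1) : ℝ) * x ^ (2 * k + 1)) := by
    simp_rw [s2_two_mul_add_one, pow_succ, pow_mul]
    push_cast
    exact (((hS2.add hgeo).mul_right x).congr (fun n => by ring))
  have key := tsum_even_add_odd (f := fun n : ℕ => (s2 n : ℝ) * x ^ n) he ho
  rw [← key]
  have e1 : (∑' k : ℕ, (s2 (2 * k) : ℝ) * x ^ (2 * k))
      = ∑' n : ℕ, (s2 n : ℝ) * (x ^ 2) ^ n := by
    congr 1; funext k; rw [s2_two_mul, pow_mul]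
  have e2 : (∑' k : ℕ, (s2 (2 * k + 1) : ℝ) * x ^ (2 * k + 1))
      = x * (∑' n : ℕ, (s2 n : ℝ) * (x ^ 2) ^ n) + x * (1 - x^2)⁻¹ := by
    have : (fun k : ℕ => (s2 (2 * k + 1) : ℝ) * x ^ (2 * k + 1))
        = fun k : ℕ => ((s2 k : ℝ) * (x ^ 2) ^ k + (x ^ 2) ^ k) * x := by
      funext k; rw [s2_two_mul_add_one, pow_succ, pow_mul]; push_cast; ring
    rw [this, tsum_mul_right, Summable.tsum_add hS2 hgeo, tsum_geometric_of_lt_one hx20 hx2]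
    ring
  rw [e1, e2]
  rw [div_eq_mul_inv]
  ring

lemma iter {x : ℝ} (h0 : 0 ≤ x) (h1 : x < 1) (N : ℕ) :
    (∑' n : ℕ, (s2 n : ℝ) * x ^ n)
      = (∑ k ∈ Finset.range N, x ^ (2 ^ k) / ((1 - x) * (1 + x ^ (2 ^ k))))
        + ((1 - x ^ (2 ^ N)) / (1 - x)) * (∑' n : ℕ, (s2 n : ℝ) * (x ^ (2 ^ N)) ^ n) := by
  have hx : (1 : ℝ) - x ≠ 0 := by linarith
  induction N with
  | zero => simp [pow_one, div_self hx]
  | succ N ih =>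
    set y := x ^ (2 ^ N) with hy
    have hy0 : 0 ≤ y := by positivity
    have hy1 : y < 1 := pow_lt_one₀ h0 h1 (by positivity)
    have hyne : (1 : ℝ) - y ≠ 0 := by linarith
    have hyne' : (1 : ℝ) + y ≠ 0 := by linarith
    have hy2 : y ^ 2 = x ^ (2 ^ (N + 1)) := by
      rw [← pow_mul, pow_succ]
    rw [ih, funEq hy0 hy1, Finset.sum_range_succ, hy2]
    have h12 : (1 : ℝ) - y ^ 2 = (1 - y) * (1 + y) := by ring
    rw [← hy2, h12]
    field_simp
    ring

lemma summable_g {x : ℝ} (h0 : 0 ≤ x) (h1 : x < 1) :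
    Summable (fun k : ℕ => x ^ (2 ^ k) / ((1 - x) * (1 + x ^ (2 ^ k)))) := by
  have hx : (0 : ℝ) < 1 - x := by linarith
  refine Summable.of_nonneg_of_le
    (fun k => div_nonneg (pow_nonneg h0 _) (mul_nonneg hx.le (by positivity))) (fun k => ?_)
    ((summable_geometric_of_lt_one h0 h1).mul_right (1 - x)⁻¹)
  have h1k : (1 : ℝ) ≤ 1 + x ^ (2 ^ k) := by linarith [pow_nonneg h0 (2^k)]
  have : x ^ (2 ^ k) ≤ x ^ k := pow_le_pow_of_le_one h0 h1.le (Nat.le_of_lt (Nat.lt_two_pow_self (n := k)))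
  calc x ^ (2 ^ k) / ((1 - x) * (1 + x ^ (2 ^ k)))
      ≤ x ^ k / ((1 - x) * 1) := by
        apply div_le_div₀ (pow_nonneg h0 k) this (by linarith)
        nlinarith
    _ = x ^ k * (1 - x)⁻¹ := by rw [mul_one, div_eq_mul_inv]

lemma S_eq {x : ℝ} (h0 : 0 ≤ x) (h1 : x < 1) :
    (∑' n : ℕ, (s2 n : ℝ) * x ^ n)
      = ∑' k : ℕ, x ^ (2 ^ k) / ((1 - x) * (1 + x ^ (2 ^ k))) := by
  have hx : (0 : ℝ) < 1 - x := by linarith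
  have htail : Filter.Tendsto
      (fun N : ℕ => ((1 - x ^ (2 ^ N)) / (1 - x)) * (∑' n : ℕ, (s2 n : ℝ) * (x ^ (2 ^ N)) ^ n))
      Filter.atTop (nhds 0) := by
    have hb : ∀ N : ℕ, ((1 - x ^ (2 ^ N)) / (1 - x)) * (∑' n : ℕ, (s2 n : ℝ) * (x ^ (2 ^ N)) ^ n)
        ≤ x ^ N * ((1 - x)⁻¹ * (1 - x)⁻¹ ^ 2) := by
      intro N
      have hy0 : (0:ℝ) ≤ x ^ (2 ^ N) := by positivity
      have hy1 : x ^ (2 ^ N) < 1 := pow_lt_one₀ h0 h1 (by positivity)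
      have hS := S_le hy0 hy1
      have h2 : x ^ (2 ^ N) / (1 - x ^ (2 ^ N)) ^ 2 ≤ x ^ N * (1 - x)⁻¹ ^ 2 := by
        rw [div_eq_mul_inv]
        apply mul_le_mul
        · exact pow_le_pow_of_le_one h0 h1.le (Nat.le_of_lt (Nat.lt_two_pow_self (n := N)))
        · have hyx : x ^ (2 ^ N) ≤ x := by
            simpa using pow_le_pow_of_le_one h0 h1.le (Nat.one_le_two_pow)
          rw [← inv_pow]
          apply pow_le_pow_left₀ (inv_nonneg.mpr (by linarith))
          rw [inv_le_inv₀ (by nlinarith) hx]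
          linarith
        · positivity
        · positivity
      have h3 : (1 - x ^ (2 ^ N)) / (1 - x) ≤ (1 - x)⁻¹ := by
        rw [div_eq_mul_inv]
        nlinarith [inv_nonneg.mpr hx.le, pow_nonneg h0 (2^N)]
      have hSnn : (0:ℝ) ≤ ∑' n : ℕ, (s2 n : ℝ) * (x ^ (2 ^ N)) ^ n :=
        tsum_nonneg (fun n => by positivity)
      calc ((1 - x ^ (2 ^ N)) / (1 - x)) * (∑' n : ℕ, (s2 n : ℝ) * (x ^ (2 ^ N)) ^ n)
          ≤ (1 - x)⁻¹ * (x ^ (2 ^ N) / (1 - x ^ (2 ^ N)) ^ 2) := by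
            apply mul_le_mul h3 (le_trans hS (le_refl _)) hSnn (by positivity)
        _ ≤ (1 - x)⁻¹ * (x ^ N * (1 - x)⁻¹ ^ 2) := by
            apply mul_le_mul_of_nonneg_left h2 (by positivity)
        _ = x ^ N * ((1 - x)⁻¹ * (1 - x)⁻¹ ^ 2) := by ring
    have hlb : ∀ N : ℕ, (0:ℝ) ≤ ((1 - x ^ (2 ^ N)) / (1 - x)) * (∑' n : ℕ, (s2 n : ℝ) * (x ^ (2 ^ N)) ^ n) := by
      intro N
      have hy1 : x ^ (2 ^ N) < 1 := pow_lt_one₀ h0 h1 (by positivity)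
      have := tsum_nonneg (L := SummationFilter.unconditional ℕ) (fun n => by positivity : ∀ n : ℕ, (0:ℝ) ≤ (s2 n : ℝ) * (x ^ (2 ^ N)) ^ n)
      apply mul_nonneg (div_nonneg (by linarith) hx.le) this
    have hgeo : Filter.Tendsto (fun N : ℕ => x ^ N * ((1 - x)⁻¹ * (1 - x)⁻¹ ^ 2))
        Filter.atTop (nhds 0) := by
      have := (tendsto_pow_atTop_nhds_zero_of_lt_one h0 h1).mul_const ((1 - x)⁻¹ * (1 - x)⁻¹ ^ 2)
      simpa using this
    exact squeeze_zero hlb hb hgeo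
  have hsum := (summable_g h0 h1).hasSum.tendsto_sum_nat
  have heq : ∀ N : ℕ, (∑ k ∈ Finset.range N, x ^ (2 ^ k) / ((1 - x) * (1 + x ^ (2 ^ k))))
      = (∑' n : ℕ, (s2 n : ℝ) * x ^ n)
        - ((1 - x ^ (2 ^ N)) / (1 - x)) * (∑' n : ℕ, (s2 n : ℝ) * (x ^ (2 ^ N)) ^ n) := by
    intro N; rw [iter h0 h1 N]; ring
  have hlim2 : Filter.Tendsto (fun N : ℕ => ∑ k ∈ Finset.range N, x ^ (2 ^ k) / ((1 - x) * (1 + x ^ (2 ^ k))))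
      Filter.atTop (nhds (∑' n : ℕ, (s2 n : ℝ) * x ^ n)) := by
    simp_rw [heq]
    simpa using (tendsto_const_nhds.sub htail)
  exact tendsto_nhds_unique hlim2 hsum

lemma summable_T {b : ℕ} (hb : 2 ≤ b) :
    Summable (fun k : ℕ => ((b:ℝ) ^ 2 ^ k + 1)⁻¹) := by
  refine Summable.of_nonneg_of_le (fun k => by positivity) (fun k => ?_)
    (summable_geometric_of_lt_one (by norm_num) (by norm_num : (2:ℝ)⁻¹ < 1))
  have h1 : ((2:ℝ)) ^ k ≤ (b:ℝ) ^ 2 ^ k + 1 := by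
    calc ((2:ℝ)) ^ k ≤ (2:ℝ) ^ 2 ^ k := by
          apply pow_le_pow_right₀ (by norm_num) (Nat.le_of_lt (Nat.lt_two_pow_self (n := k)))
      _ ≤ (b:ℝ) ^ 2 ^ k := by
          apply pow_le_pow_left₀ (by norm_num) (by exact_mod_cast hb)
      _ ≤ (b:ℝ) ^ 2 ^ k + 1 := by linarith
  rw [inv_pow]
  exact inv_anti₀ (by positivity) h1

lemma prod_L {b : ℕ} (hb : 2 ≤ b) (N : ℕ) :
    ((b:ℝ) - 1) * (∏ k ∈ Finset.range N, ((b:ℕ) ^ 2 ^ k + 1) : ℕ)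
      = (b:ℝ) ^ 2 ^ N - 1 := by
  induction N with
  | zero => simp
  | succ N ih =>
    rw [Finset.prod_range_succ]
    push_cast at ih ⊢
    have : (b:ℝ) ^ 2 ^ (N + 1) = ((b:ℝ) ^ 2 ^ N) ^ 2 := by
      rw [← pow_mul, pow_succ]
    rw [this]
    linear_combination ((b:ℝ) ^ 2 ^ N + 1) * ih

lemma T_irrational {b : ℕ} (hb : 2 ≤ b) :
    Irrational (∑' k : ℕ, ((b:ℝ) ^ 2 ^ k + 1)⁻¹) := by
  set f : ℕ → ℝ := fun k => ((b:ℝ) ^ 2 ^ k + 1)⁻¹ with hf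
  have hbR : (2:ℝ) ≤ (b:ℝ) := by exact_mod_cast hb
  have hsum : Summable f := summable_T hb
  rw [Irrational]
  intro hr
  obtain ⟨r, hrT⟩ := hr
  set T := ∑' k : ℕ, f k with hT
  set q : ℕ := r.den with hq
  set p : ℤ := r.num with hp
  have hq0 : 0 < (q:ℝ) := by exact_mod_cast r.pos
  have hqT : (q:ℝ) * T = (p:ℝ) := by
    rw [← hrT, hp, hq]
    push_cast [Rat.cast_def]
    field_simp
  set c : ℝ := (q:ℝ) / ((b:ℝ) - 1) with hc
  have hbm1 : (1:ℝ) ≤ (b:ℝ) - 1 := by linarith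
  have hc0 : 0 < c := div_pos hq0 (by linarith)
  have hδ0 : 0 < c + 1 - ⌈c⌉ := by
    have := Int.ceil_lt_add_one c
    linarith
  set δ : ℝ := c + 1 - ⌈c⌉ with hδdef
  have hδ : 0 < δ := hδ0
  clear_value T δ
  obtain ⟨N, hN⟩ := pow_unbounded_of_one_lt (2 * c / δ) (by norm_num : (1:ℝ) < 2)
  set M : ℝ := (b:ℝ) ^ 2 ^ N with hM
  have hM2 : (2:ℝ) ^ N ≤ M := by
    calc ((2:ℝ)) ^ N ≤ (2:ℝ) ^ 2 ^ N :=
          pow_le_pow_right₀ (by norm_num) (Nat.le_of_lt (Nat.lt_two_pow_self (n := N)))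
      _ ≤ M := pow_le_pow_left₀ (by norm_num) hbR _
  have hM2' : (2:ℝ) ≤ M := by
    calc (2:ℝ) ≤ (2:ℝ) ^ 2 ^ N := by
          apply le_self_pow₀ (by norm_num)
          positivity
      _ ≤ M := pow_le_pow_left₀ (by norm_num) hbR _
  set L : ℕ := ∏ k ∈ Finset.range N, (b ^ 2 ^ k + 1) with hLdef
  have hL : ((b:ℝ) - 1) * (L:ℝ) = M - 1 := prod_L hb N
  have hdvd : ∀ k ∈ Finset.range N, (b ^ 2 ^ k + 1) ∣ L :=
    fun k hk => Finset.dvd_prod_of_mem _ hk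
  have hfN : f N = (M + 1)⁻¹ := by rw [hf]
  have hMe : ∀ i : ℕ, (b:ℝ) ^ 2 ^ (i + 1 + N) = M ^ 2 ^ (i + 1) := by
    intro i
    rw [hM, ← pow_mul]
    congr 1
    rw [← pow_add]
    congr 1
    ring
  clear_value M L
  have hLR : (L:ℝ) = (M - 1) / ((b:ℝ) - 1) := by
    field_simp
    linarith [hL]
  set head : ℝ := ∑ k ∈ Finset.range N, f k with hhead
  set tail : ℝ := ∑' k : ℕ, f (k + N) with htail
  have hsplit : head + tail = T := by
    rw [hhead, htail, hT]
    exact Summable.sum_add_tsum_nat_add N hsum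
  have hsum' : Summable (fun k : ℕ => f (k + N)) := (summable_nat_add_iff N).2 hsum
  clear_value head tail
  -- integrality
  have hLf : ∀ k ∈ Finset.range N, (L:ℝ) * f k = ((L / (b ^ 2 ^ k + 1) : ℕ) : ℝ) := by
    intro k hk
    rw [Nat.cast_div (hdvd k hk) (by positivity), hf]
    have hcast : ((b ^ 2 ^ k + 1 : ℕ) : ℝ) = (b:ℝ) ^ 2 ^ k + 1 := by push_cast; ring
    rw [hcast]
    field_simp
  set m : ℤ := p * L - q * ∑ k ∈ Finset.range N, ((L / (b ^ 2 ^ k + 1) : ℕ) : ℤ) with hm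
  have hIm : (q:ℝ) * L * tail = (m:ℝ) := by
    have h1 : tail = T - head := by linarith [hsplit]
    have h2 : (q:ℝ) * L * head = (q:ℝ) * ∑ k ∈ Finset.range N, ((L / (b ^ 2 ^ k + 1) : ℕ) : ℝ) := by
      rw [hhead, Finset.mul_sum, Finset.mul_sum]
      apply Finset.sum_congr rfl
      intro k hk
      rw [← hLf k hk]
      ring
    have h3 : (q:ℝ) * L * T = (p:ℝ) * L := by
      rw [← hqT]; ring
    have hm' : (m:ℝ) = (p:ℝ) * L - (q:ℝ) * ∑ k ∈ Finset.range N, ((L / (b ^ 2 ^ k + 1) : ℕ) : ℝ) := by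
      rw [hm]
      simp only [Int.cast_sub, Int.cast_mul, Int.cast_natCast, Int.cast_sum]
    rw [h1, mul_sub, h3, h2, hm']
  clear_value m
  -- lower bound
  have hlow : (M + 1)⁻¹ ≤ tail := by
    have := Summable.le_tsum hsum' 0 (fun i _ => by rw [hf]; positivity)
    rw [← htail] at this
    simpa [hfN] using this
  -- upper bound
  have hMpos : (0:ℝ) < M := by linarith
  have hM1 : (0:ℝ) < M - 1 := by linarith
  have hMinv : M⁻¹ < 1 := by
    rw [inv_lt_one_iff₀]; right; linarith
  have hrest : (∑' i : ℕ, f (i + 1 + N)) ≤ (M * (M - 1))⁻¹ := by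
    have hbound : ∀ i : ℕ, f (i + 1 + N) ≤ M⁻¹ ^ 2 * M⁻¹ ^ i := by
      intro i
      have hle : M ^ (i + 2) ≤ M ^ 2 ^ (i + 1) := by
        apply pow_le_pow_right₀ (by linarith)
        have := Nat.lt_two_pow_self (n := i + 1)
        omega
      have h1 : f (i + 1 + N) ≤ (M ^ (i + 2))⁻¹ := by
        rw [hf]
        apply inv_anti₀ (by positivity)
        calc M ^ (i + 2) ≤ M ^ 2 ^ (i+1) := hle
          _ = (b:ℝ) ^ 2 ^ (i + 1 + N) := (hMe i).symm
          _ ≤ (b:ℝ) ^ 2 ^ (i + 1 + N) + 1 := by linarith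
      calc f (i + 1 + N) ≤ (M ^ (i + 2))⁻¹ := h1
        _ = M⁻¹ ^ 2 * M⁻¹ ^ i := by
            rw [← inv_pow]
            ring
    have hgsum : Summable (fun i : ℕ => M⁻¹ ^ 2 * M⁻¹ ^ i) :=
      (summable_geometric_of_lt_one (by positivity) hMinv).mul_left _
    have hsum'' : Summable (fun i : ℕ => f (i + 1 + N)) := by
      have h := (summable_nat_add_iff (N + 1)).2 hsum
      apply h.congr
      intro i
      congr 1
      ring
    calc (∑' i : ℕ, f (i + 1 + N)) ≤ ∑' i : ℕ, M⁻¹ ^ 2 * M⁻¹ ^ i :=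
          Summable.tsum_le_tsum hbound hsum'' hgsum
      _ = M⁻¹ ^ 2 * (1 - M⁻¹)⁻¹ := by
          rw [tsum_mul_left, tsum_geometric_of_lt_one (by positivity) hMinv]
      _ = (M * (M - 1))⁻¹ := by
          rw [mul_inv]
          field_simp
  have hup : tail ≤ (M + 1)⁻¹ + (M * (M - 1))⁻¹ := by
    have h0 : tail = f N + ∑' i : ℕ, f (i + 1 + N) := by
      rw [htail, Summable.tsum_eq_zero_add hsum']
      simp only [zero_add]
    rw [h0, hfN]
    linarith [hrest]
  -- final contradiction
  have hLnn : (0:ℝ) ≤ (L:ℝ) := Nat.cast_nonneg L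
  have hIc : (q:ℝ) * L * tail < c := by
    have hkey : (M - 1) * ((M + 1)⁻¹ + (M * (M - 1))⁻¹) < 1 := by
      rw [show (M - 1) * ((M + 1)⁻¹ + (M * (M - 1))⁻¹) = (M^2 + 1)/(M*(M+1)) by
        field_simp
        ring]
      rw [div_lt_one (by positivity)]
      nlinarith
    calc (q:ℝ) * L * tail ≤ (q:ℝ) * L * ((M + 1)⁻¹ + (M * (M - 1))⁻¹) := by
          apply mul_le_mul_of_nonneg_left hup (mul_nonneg hq0.le hLnn)
      _ = c * ((M - 1) * ((M + 1)⁻¹ + (M * (M - 1))⁻¹)) := by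
          rw [hLR, hc]
          ring
      _ < c * 1 := mul_lt_mul_of_pos_left hkey hc0
      _ = c := mul_one c
  have hIlow : c - δ < (q:ℝ) * L * tail := by
    have h2N : (0:ℝ) < 2 ^ N := by positivity
    have hδ2 : 2 * c / (M + 1) < δ := by
      have h1 : 2 * c < δ * 2 ^ N := by
        rw [div_lt_iff₀ hδ] at hN
        linarith
      have h2 : δ * 2 ^ N ≤ δ * (M + 1) := by
        apply mul_le_mul_of_nonneg_left (by linarith) hδ.le
      rw [div_lt_iff₀ (by linarith)]
      linarith
    have hlb : c * ((M - 1) * (M + 1)⁻¹) ≤ (q:ℝ) * L * tail := by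
      calc c * ((M - 1) * (M + 1)⁻¹) = (q:ℝ) * L * (M + 1)⁻¹ := by
            rw [hLR, hc]
            ring
        _ ≤ (q:ℝ) * L * tail := by
            apply mul_le_mul_of_nonneg_left hlow (mul_nonneg hq0.le hLnn)
    have heq2 : c * ((M - 1) * (M + 1)⁻¹) = c - 2 * c / (M + 1) := by
      field_simp
      ring
    rw [heq2] at hlb
    linarith
  rw [hIm] at hIc hIlow
  have h1 : m < ⌈c⌉ := by
    rw [Int.lt_ceil]
    exact_mod_cast hIc
  have h2 : (m:ℝ) ≤ (⌈c⌉:ℝ) - 1 := by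
    have : m ≤ ⌈c⌉ - 1 := by omega
    exact_mod_cast this
  rw [hδdef] at hIlow
  linarith

theorem stmt14 : ∀ b : ℕ, 2 ≤ b →
    Irrational (∑' n : ℕ, (s2 n : ℝ) / (b : ℝ) ^ n) := by
  intro b hb
  have hbR : (2:ℝ) ≤ (b:ℝ) := by exact_mod_cast hb
  have hb0 : (0:ℝ) < (b:ℝ) := by linarith
  set x : ℝ := (b:ℝ)⁻¹ with hx
  have hx0 : 0 ≤ x := by positivity
  have hx1 : x < 1 := by
    rw [hx, inv_lt_one_iff₀]; right; linarith
  have h1 : (∑' n : ℕ, (s2 n : ℝ) / (b : ℝ) ^ n) = ∑' n : ℕ, (s2 n : ℝ) * x ^ n := by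
    apply tsum_congr
    intro n
    rw [hx, inv_pow, div_eq_mul_inv]
  have h2 : ∀ k : ℕ, x ^ (2 ^ k) / ((1 - x) * (1 + x ^ (2 ^ k)))
      = ((b:ℝ) / ((b:ℝ) - 1)) * ((b:ℝ) ^ 2 ^ k + 1)⁻¹ := by
    intro k
    have hB : (0:ℝ) < (b:ℝ) ^ 2 ^ k := by positivity
    rw [hx, inv_pow]
    field_simp
  rw [h1, S_eq hx0 hx1]
  simp_rw [h2]
  rw [tsum_mul_left]
  have hrat : ((b:ℝ) / ((b:ℝ) - 1)) = (((b:ℚ) / ((b:ℚ) - 1) : ℚ) : ℝ) := by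
    push_cast
    ring
  rw [hrat]
  apply Irrational.ratCast_mul (T_irrational hb)
  have hbQ : (2:ℚ) ≤ (b:ℚ) := by exact_mod_cast hb
  apply div_ne_zero
  · intro h; rw [h] at hbQ; norm_num at hbQ
  · intro h; rw [sub_eq_zero] at h; rw [h] at hbQ; norm_num at hbQ
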